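/- Let H₁ and H₂ be Hilbert spaces, T : D₁ → D₂ a linear bijection between subspaces D₁ ⊆ H₁ and D₂ ⊆ H₂ such that ‖Tf‖_{H₂} = ‖f‖_{H₁} for all f ∈ D₁, and suppose (E₂, D₂) is a closed symmetric form on H₂ with E₁(f,g) := E₂(Tf, Tg) defining a form on D₁. Let G²_α be the resolvent of (E₂, D₂) on H₂ (i.e., E₂(G²_α h, g) + α⟨G²_α h, g⟩ = ⟨h, g⟩ for g ∈ D₂). Extend T to an isometry T̄ : closure(D₁) → H₂ and suppose D₂ is dense in H₂. Then the resolvent G¹_α of (E₁, D₁) on H₁ satisfies G¹_α f = T̄⁻¹ G²_α (T̄ Π f) for every f ∈ H₁, where Π is the orthogonal projection of H₁ onto closure(D₁). -/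

import Mathlib

open Filter Topology

/-!
`T u`, for `u = G¹_α f`, solves the resolvent equation of `(E₂, D₂)` with right-hand side
`T̄ (Π f)`: test functions in `D₂` are all of the form `T g` with `g ∈ D₁`, the isometry `T̄`
preserves inner products, and `⟨f, g⟩ = ⟨Π f, g⟩` for `g ∈ D₁`. Since `E₂` is nonnegative, the
resolvent equation has at most one solution in `D₂`, so `T u = G²_α (T̄ (Π f))`; applying `T̄⁻¹`
gives the claim.
-/

def IsResolvent {H : Type*} [NormedAddCommGroup H] [InnerProductSpace ℝ H]
    (E : H →ₗ[ℝ] H →ₗ[ℝ] ℝ) (D : Submodule ℝ H) (α : ℝ) (h u : H) : Prop :=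
  u ∈ D ∧ ∀ g ∈ D, E u g + α * (inner ℝ u g : ℝ) = (inner ℝ h g : ℝ)

theorem IsResolvent.unique {H : Type*} [NormedAddCommGroup H] [InnerProductSpace ℝ H]
    {E : H →ₗ[ℝ] H →ₗ[ℝ] ℝ} {D : Submodule ℝ H} (hpos : ∀ w ∈ D, 0 ≤ E w w)
    {α : ℝ} (hα : 0 < α) {h u v : H}
    (hu : IsResolvent E D α h u) (hv : IsResolvent E D α h v) : u = v := by
  have hw : u - v ∈ D := D.sub_mem hu.1 hv.1
  have hzero : E (u - v) (u - v) + α * ‖u - v‖ ^ 2 = 0 := by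
    rw [← real_inner_self_eq_norm_sq, LinearMap.map_sub₂, inner_sub_left]
    linear_combination hu.2 _ hw - hv.2 _ hw
  have hnorm : ‖u - v‖ ^ 2 = 0 := by
    nlinarith [hpos _ hw, sq_nonneg ‖u - v‖]
  simpa [sub_eq_zero] using hnorm

theorem inner_map_map_of_norm_map {E F : Type*} [NormedAddCommGroup E] [InnerProductSpace ℝ E]
    [NormedAddCommGroup F] [InnerProductSpace ℝ F] {S : Submodule ℝ E} {φ : E → F}
    (hadd : ∀ x ∈ S, ∀ y ∈ S, φ (x + y) = φ x + φ y) (hnorm : ∀ x ∈ S, ‖φ x‖ = ‖x‖)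
    {x y : E} (hx : x ∈ S) (hy : y ∈ S) : (inner ℝ (φ x) (φ y) : ℝ) = inner ℝ x y := by
  have hsum : ‖φ x + φ y‖ ^ 2 = ‖x + y‖ ^ 2 := by
    rw [← hadd x hx y hy, hnorm _ (S.add_mem hx hy)]
  rw [norm_add_sq_real, norm_add_sq_real, hnorm x hx, hnorm y hy] at hsum
  linarith

theorem stmt11_general
    {H₁ : Type*} [NormedAddCommGroup H₁] [InnerProductSpace ℝ H₁]
    {H₂ : Type*} [NormedAddCommGroup H₂] [InnerProductSpace ℝ H₂]
    (D₁ : Submodule ℝ H₁) (D₂ : Submodule ℝ H₂)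
    (T : H₁ → H₂)
    (hT_mem : ∀ f ∈ D₁, T f ∈ D₂)
    (hT_surj : ∀ h ∈ D₂, ∃ f ∈ D₁, T f = h)
    -- the closed symmetric form E₂ on D₂ (E₁ is its pull-back by T)
    (𝓔₂ : H₂ →ₗ[ℝ] H₂ →ₗ[ℝ] ℝ)
    (hpos : ∀ u ∈ D₂, 0 ≤ 𝓔₂ u u)
    -- the resolvent of (E₂, D₂) on H₂
    (G2 : ℝ → H₂ → H₂)
    (hG2 : ∀ α : ℝ, 0 < α → ∀ h : H₂, G2 α h ∈ D₂ ∧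
      ∀ g ∈ D₂, 𝓔₂ (G2 α h) g + α * (inner ℝ (G2 α h) g : ℝ) = (inner ℝ h g : ℝ))
    -- the isometric extension T̄ of T to the closure of D₁, and its inverse
    (Tbar : H₁ → H₂) (Tinv : H₂ → H₁)
    (hTbar_eq : ∀ f ∈ D₁, Tbar f = T f)
    (hTbar_iso : ∀ f ∈ closure (D₁ : Set H₁), ‖Tbar f‖ = ‖f‖)
    (hTbar_add : ∀ f ∈ closure (D₁ : Set H₁), ∀ g ∈ closure (D₁ : Set H₁),
      Tbar (f + g) = Tbar f + Tbar g)
    (hTinv_left : ∀ f ∈ closure (D₁ : Set H₁), Tinv (Tbar f) = f)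
    -- the orthogonal projection of H₁ onto the closure of D₁
    (proj : H₁ → H₁)
    (hproj_mem : ∀ f : H₁, proj f ∈ closure (D₁ : Set H₁))
    (hproj_orth : ∀ f : H₁, ∀ g ∈ closure (D₁ : Set H₁), (inner ℝ (f - proj f) g : ℝ) = 0)
    -- the resolvent of the pulled-back form (E₁, D₁) on H₁
    (G1 : ℝ → H₁ → H₁)
    (hG1 : ∀ α : ℝ, 0 < α → ∀ f : H₁, G1 α f ∈ D₁ ∧
      ∀ g ∈ D₁, 𝓔₂ (T (G1 α f)) (T g) + α * (inner ℝ (G1 α f) g : ℝ) = (inner ℝ f g : ℝ)) :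
    ∀ α : ℝ, 0 < α → ∀ f : H₁, G1 α f = Tinv (G2 α (Tbar (proj f))) := by
  intro α hα f
  obtain ⟨hu, hu_eq⟩ := hG1 α hα f
  have hTbar_inner {x y : H₁} (hx : x ∈ closure (D₁ : Set H₁)) (hy : y ∈ closure (D₁ : Set H₁)) :
      (inner ℝ (Tbar x) (Tbar y) : ℝ) = inner ℝ x y :=
    inner_map_map_of_norm_map (S := D₁.topologicalClosure) hTbar_add hTbar_iso hx hy
  have hTu : IsResolvent 𝓔₂ D₂ α (Tbar (proj f)) (T (G1 α f)) := by
    refine ⟨hT_mem _ hu, fun _ hTg ↦ ?_⟩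
    obtain ⟨g, hg, rfl⟩ := hT_surj _ hTg
    have hproj_inner : (inner ℝ f g : ℝ) = inner ℝ (proj f) g := by
      rw [← sub_eq_zero, ← inner_sub_left, hproj_orth f g (subset_closure hg)]
    rw [← hTbar_eq _ hu, ← hTbar_eq _ hg, hTbar_inner (subset_closure hu) (subset_closure hg),
      hTbar_inner (hproj_mem f) (subset_closure hg), ← hproj_inner, hTbar_eq _ hu, hTbar_eq _ hg]
    exact hu_eq g hg
  rw [← hTu.unique hpos hα (hG2 α hα _), ← hTbar_eq _ hu, hTinv_left _ (subset_closure hu)]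

/-- Transfer of resolvents across an isometric form-preserving bijection `T` between
the (not necessarily dense) form domain `D₁ ⊆ H₁` and a dense domain `D₂ ⊆ H₂`:
`G¹_α f = T̄⁻¹ G²_α (T̄ (proj f))`. -/
theorem stmt11
    {H₁ : Type*} [NormedAddCommGroup H₁] [InnerProductSpace ℝ H₁] [CompleteSpace H₁]
    {H₂ : Type*} [NormedAddCommGroup H₂] [InnerProductSpace ℝ H₂] [CompleteSpace H₂]
    (D₁ : Submodule ℝ H₁) (D₂ : Submodule ℝ H₂) (hdense : Dense (D₂ : Set H₂))
    (T : H₁ → H₂)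
    (hT_mem : ∀ f ∈ D₁, T f ∈ D₂)
    (hT_surj : ∀ h ∈ D₂, ∃ f ∈ D₁, T f = h)
    (hT_add : ∀ f ∈ D₁, ∀ g ∈ D₁, T (f + g) = T f + T g)
    (hT_smul : ∀ (c : ℝ), ∀ f ∈ D₁, T (c • f) = c • T f)
    (hT_iso : ∀ f ∈ D₁, ‖T f‖ = ‖f‖)
    -- the closed symmetric form E₂ on D₂ (E₁ is its pull-back by T)
    (𝓔₂ : H₂ →ₗ[ℝ] H₂ →ₗ[ℝ] ℝ)
    (hsym : ∀ u ∈ D₂, ∀ v ∈ D₂, 𝓔₂ u v = 𝓔₂ v u)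
    (hpos : ∀ u ∈ D₂, 0 ≤ 𝓔₂ u u)
    -- the resolvent of (E₂, D₂) on H₂
    (G2 : ℝ → H₂ → H₂)
    (hG2 : ∀ α : ℝ, 0 < α → ∀ h : H₂, G2 α h ∈ D₂ ∧
      ∀ g ∈ D₂, 𝓔₂ (G2 α h) g + α * (inner ℝ (G2 α h) g : ℝ) = (inner ℝ h g : ℝ))
    -- the isometric extension T̄ of T to the closure of D₁, and its inverse
    (Tbar : H₁ → H₂) (Tinv : H₂ → H₁)
    (hTbar_eq : ∀ f ∈ D₁, Tbar f = T f)
    (hTbar_iso : ∀ f ∈ closure (D₁ : Set H₁), ‖Tbar f‖ = ‖f‖)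
    (hTbar_add : ∀ f ∈ closure (D₁ : Set H₁), ∀ g ∈ closure (D₁ : Set H₁),
      Tbar (f + g) = Tbar f + Tbar g)
    (hTbar_smul : ∀ (c : ℝ), ∀ f ∈ closure (D₁ : Set H₁), Tbar (c • f) = c • Tbar f)
    (hTinv_left : ∀ f ∈ closure (D₁ : Set H₁), Tinv (Tbar f) = f)
    (hTinv_right : ∀ h : H₂, Tinv h ∈ closure (D₁ : Set H₁) ∧ Tbar (Tinv h) = h)
    -- the orthogonal projection of H₁ onto the closure of D₁
    (proj : H₁ → H₁)
    (hproj_mem : ∀ f : H₁, proj f ∈ closure (D₁ : Set H₁))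
    (hproj_orth : ∀ f : H₁, ∀ g ∈ closure (D₁ : Set H₁), (inner ℝ (f - proj f) g : ℝ) = 0)
    -- the resolvent of the pulled-back form (E₁, D₁) on H₁
    (G1 : ℝ → H₁ → H₁)
    (hG1 : ∀ α : ℝ, 0 < α → ∀ f : H₁, G1 α f ∈ D₁ ∧
      ∀ g ∈ D₁, 𝓔₂ (T (G1 α f)) (T g) + α * (inner ℝ (G1 α f) g : ℝ) = (inner ℝ f g : ℝ)) :
    ∀ α : ℝ, 0 < α → ∀ f : H₁, G1 α f = Tinv (G2 α (Tbar (proj f))) :=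
  stmt11_general D₁ D₂ T hT_mem hT_surj 𝓔₂ hpos G2 hG2 Tbar Tinv hTbar_eq hTbar_iso hTbar_add
    hTinv_left proj hproj_mem hproj_orth G1 hG1
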